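/- Let d ≥ 1 be an integer and P ⊆ ℤ. Then P is a Birkhoff recurrence set of order d if and only if for every t.d.s. (X,T) there exist x ∈ X and, for each i ∈ ℕ, integers n_i^1, …, n_i^d with FS({n_i^j}_{j=1}^d) ⊆ P such that for every ε = (ε_1,…,ε_d) ∈ {0,1}^d one has T^{ε_1 n_i^1 + ⋯ + ε_d n_i^d} x → x as i → ∞. -/

import Mathlib

open scoped Classical
open MeasureTheory Filter Topology

noncomputable section

/-- Integer iterate of a bijection `T` of a set: `zIter T n = T^n`. -/
def zIter {X : Type*} (T : Equiv.Perm X) (n : ℤ) : X → X := ⇑(T ^ n)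

/-- Integer iterate of a homeomorphism. -/
def hIter {X : Type*} [TopologicalSpace X] (T : X ≃ₜ X) (n : ℤ) : X → X :=
  zIter T.toEquiv n

/-- The integer nearest to `a`, with ties broken towards the smaller integer.
This is the `⌈·⌉` of the paper. -/
def nearInt (a : ℝ) : ℤ := if a - (⌊a⌋ : ℝ) ≤ 1/2 then ⌊a⌋ else ⌈a⌉

/-- The distance from `a` to the nearest integer, i.e. `‖a‖` in the paper. -/
def distInt (a : ℝ) : ℝ := |a - (nearInt a : ℝ)|

/-- Generalized polynomials of degree at most `d` (for `d ≥ 1`):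
`GP 1` is the smallest collection of functions `ℤ → ℝ` containing `n ↦ a n`
and closed under taking the nearest integer, scalar multiplication and finite sums;
`GP d` moreover contains every `GP e` for `e < d` and all functions
`n ↦ a₀ n^{p₀} ⌈f₁(n)⌉ ⋯ ⌈f k (n)⌉` with `f l ∈ GP (p l)` and `p₀ + ∑ p l = d`. -/
inductive GP : ℕ → (ℤ → ℝ) → Prop
  | lin (a : ℝ) : GP 1 (fun n => a * n)
  | mono {d : ℕ} (hd : 1 ≤ d) (a₀ : ℝ) (p₀ : ℕ) {k : ℕ} (p : Fin k → ℕ)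
      (f : Fin k → ℤ → ℝ) (hf : ∀ l, GP (p l) (f l)) (hsum : p₀ + ∑ l, p l = d) :
      GP d (fun n => a₀ * (n : ℝ) ^ p₀ * ∏ l, (nearInt (f l n) : ℝ))
  | incl {d e : ℕ} (hed : e < d) {f : ℤ → ℝ} (hf : GP e f) : GP d f
  | ceil {d : ℕ} {f : ℤ → ℝ} (hf : GP d f) : GP d (fun n => (nearInt (f n) : ℝ))
  | smul {d : ℕ} (c : ℝ) {f : ℤ → ℝ} (hf : GP d f) : GP d (fun n => c * f n)
  | add {d : ℕ} {f g : ℤ → ℝ} (hf : GP d f) (hg : GP d g) : GP d (fun n => f n + g n)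

/-- The bracket expression `L(a₁, …, a_ℓ) = a₁⌈L(a₂, …, a_ℓ)⌉`, `L(a) = a`. -/
def Lfun : List ℝ → ℝ
  | [] => 0
  | [a] => a
  | a :: b :: rest => a * (nearInt (Lfun (b :: rest)) : ℝ)

/-- Special generalized polynomials of degree at most `d`:
the functions `n ↦ L(n^{j₁} a₁, …, n^{j_ℓ} a_ℓ)` with `1 ≤ ℓ`, `j t ≥ 1`, `∑ j t ≤ d`. -/
def SGP (d : ℕ) (g : ℤ → ℝ) : Prop :=
  ∃ ℓ : ℕ, 1 ≤ ℓ ∧ ∃ (a : Fin ℓ → ℝ) (j : Fin ℓ → ℕ),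
    (∀ t, 1 ≤ j t) ∧ (∑ t, j t) ≤ d ∧
    g = fun n : ℤ => Lfun (List.ofFn fun t => (n : ℝ) ^ (j t) * a t)

/-- `FS({n i}) = {n_{i₁} + ⋯ + n_{i_k} : i₁ < ⋯ < i_k}`, the set of finite sums. -/
def FS {d : ℕ} (n : Fin d → ℤ) : Set ℤ :=
  { m | ∃ I : Finset (Fin d), I.Nonempty ∧ m = ∑ i ∈ I, n i }

/-- `SG d P`: sums `p_{i₁} + ⋯ + p_{i_k}` over strictly increasing finite index
sequences whose consecutive gaps are at most `d` (infinite sequence `P`). -/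
def SG (d : ℕ) (P : ℕ → ℤ) : Set ℤ :=
  { n | ∃ k : ℕ, ∃ i : Fin (k + 1) → ℕ, StrictMono i ∧
      (∀ t : Fin k, i t.succ - i t.castSucc ≤ d) ∧ n = ∑ t, P (i t) }

/-- `SGfin d P` : the same for a finite sequence `P` of length `m`. -/
def SGfin (d : ℕ) {m : ℕ} (P : Fin m → ℤ) : Set ℤ :=
  { n | ∃ k : ℕ, ∃ i : Fin (k + 1) → Fin m, StrictMono i ∧
      (∀ t : Fin k, (i t.succ : ℕ) - (i t.castSucc : ℕ) ≤ d) ∧ n = ∑ t, P (i t) }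

/-- A set of integers is syndetic if it has bounded gaps. -/
def Syndetic (A : Set ℤ) : Prop :=
  ∃ N : ℕ, ∀ i : ℤ, ∃ j, i ≤ j ∧ j ≤ i + N ∧ j ∈ A

/-- `F` has positive upper Banach density. -/
def PosUpperBanachDensity (F : Set ℤ) : Prop :=
  ∃ δ : ℝ, 0 < δ ∧ ∀ N : ℕ, ∃ (a : ℤ) (L : ℕ), N ≤ L ∧ 1 ≤ L ∧
    δ * L ≤ ((Finset.Icc a (a + L - 1)).filter (fun x => x ∈ F)).card

/-- A set `A ⊆ ℤ` contains finite IP-sets of arbitrarily long lengths. -/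
def ContainsArbLongFIP (A : Set ℤ) : Prop :=
  ∀ k : ℕ, 1 ≤ k → ∃ p : Fin k → ℤ, FS p ⊆ A

/-- A topological dynamical system `(X, T)` is minimal: every orbit is dense. -/
def MinimalTDS {X : Type*} [TopologicalSpace X] (T : X ≃ₜ X) : Prop :=
  ∀ x : X, Dense (Set.range fun n : ℤ => hIter T n x)

/-- `Nset T x U = N(x, U) = {n ∈ ℤ : Tⁿ x ∈ U}`. -/
def Nset {X : Type*} [TopologicalSpace X] (T : X ≃ₜ X) (x : X) (U : Set X) : Set ℤ :=
  { n : ℤ | hIter T n x ∈ U }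

/-- The regionally proximal relation of order `d`. -/
def RPd {X : Type*} [MetricSpace X] (T : X ≃ₜ X) (d : ℕ) (x y : X) : Prop :=
  ∀ δ : ℝ, 0 < δ → ∃ (x' y' : X) (n : Fin d → ℤ),
    dist x x' < δ ∧ dist y y' < δ ∧
    ∀ ε : Finset (Fin d), ε.Nonempty →
      dist (hIter T (∑ i ∈ ε, n i) x') (hIter T (∑ i ∈ ε, n i) y') < δ

/-- `S` is a set of `d`-topological recurrence. -/
def TopRecSet (d : ℕ) (S : Set ℤ) : Prop :=
  ∀ (X : Type) [MetricSpace X] [CompactSpace X] (T : X ≃ₜ X), MinimalTDS T →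
    ∀ U : Set X, IsOpen U → U.Nonempty →
      ∃ n ∈ S, (⋂ j ∈ Finset.range (d + 1), hIter T ((j : ℤ) * n) ⁻¹' U).Nonempty

/-- `S` is a set of `d`-recurrence (measurable recurrence). -/
def MeasRecSet (d : ℕ) (S : Set ℤ) : Prop :=
  ∀ (Y : Type) [MeasurableSpace Y] [StandardBorelSpace Y]
    (μ : Measure Y) [IsProbabilityMeasure μ] (T : Y ≃ᵐ Y),
    MeasurePreserving (⇑T) μ μ →
    ∀ A : Set Y, MeasurableSet A → 0 < μ A →
      ∃ n ∈ S, 0 < μ (⋂ j ∈ Finset.range (d + 1), zIter T.toEquiv ((j : ℤ) * n) ⁻¹' A)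

/-- `P` is a Birkhoff recurrence set of order `d`. -/
def BirkhoffRecSet (d : ℕ) (P : Set ℤ) : Prop :=
  ∀ (X : Type) [MetricSpace X] [CompactSpace X] (T : X ≃ₜ X), MinimalTDS T →
    ∀ U : Set X, IsOpen U → U.Nonempty →
      ∃ n : Fin d → ℤ, FS n ⊆ P ∧ (U ∩ ⋂ m ∈ FS n, hIter T m ⁻¹' U).Nonempty

/-- `F` is a Poincaré recurrence set of order `d`. -/
def PoincareRecSet (d : ℕ) (F : Set ℤ) : Prop :=
  ∀ (Y : Type) [MeasurableSpace Y] [StandardBorelSpace Y]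
    (μ : Measure Y) [IsProbabilityMeasure μ] (T : Y ≃ᵐ Y),
    MeasurePreserving (⇑T) μ μ →
    ∀ A : Set Y, MeasurableSet A → 0 < μ A →
      ∃ n : Fin d → ℤ, FS n ⊆ F ∧ 0 < μ (A ∩ ⋂ m ∈ FS n, zIter T.toEquiv m ⁻¹' A)

/-- The upper unitriangular matrix `M(a)` with entries `(M(a))_{i, i+k} = a i k`
(1-based indexing). -/
def Mmat (d : ℕ) (a : ℕ → ℕ → ℝ) : Matrix (Fin (d + 1)) (Fin (d + 1)) ℝ :=
  fun r c =>
    if (r : ℕ) = (c : ℕ) then 1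
    else if (r : ℕ) < (c : ℕ) then a ((r : ℕ) + 1) ((c : ℕ) - (r : ℕ)) else 0

/-- `P_ℓ(a; i, k) = ∑ a_i^{s₁} a_{i+s₁}^{s₂} ⋯`, sum over `(s₁,…,s_ℓ) ∈ {1,…,k}^ℓ`
with `s₁ + ⋯ + s_ℓ = k`. -/
def Ppoly (a : ℕ → ℕ → ℝ) (i k ℓ : ℕ) : ℝ :=
  ∑ s ∈ Finset.univ.filter (fun s : Fin ℓ → Fin k => (∑ t, ((s t : ℕ) + 1)) = k),
    ∏ t : Fin ℓ,
      a (i + ∑ u ∈ Finset.univ.filter (fun u : Fin ℓ => u < t), ((s u : ℕ) + 1))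
        ((s t : ℕ) + 1)

/-- The upper unitriangular matrix with superdiagonal `α₁, …, α_d` (1-based). -/
def Amat (d : ℕ) (α : ℕ → ℝ) : Matrix (Fin (d + 1)) (Fin (d + 1)) ℝ :=
  fun r c =>
    if (r : ℕ) = (c : ℕ) then 1
    else if (c : ℕ) = (r : ℕ) + 1 then α ((r : ℕ) + 1) else 0

end

/-! Forward direction: restrict `T` to a minimal subsystem (Zorn). There, the Birkhoff property
makes the set of points returning within `r` along some finite IP-set in `P` open and dense for
every `r > 0`, and any point of the Baire intersection over `r = 1/(i+1)` works. Backward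
direction: move the recurrent point into `U` along its dense orbit; since the powers of `T`
commute, the image still returns to `U` along the same finite sums. -/

section Iterates

variable {X : Type*} [TopologicalSpace X]

theorem hIter_eq_coe_zpow (T : X ≃ₜ X) (n : ℤ) : hIter T n = ⇑(T ^ n) := by
  let toPerm : (X ≃ₜ X) →* Equiv.Perm X := ⟨⟨Homeomorph.toEquiv, rfl⟩, fun _ _ => rfl⟩
  exact congrArg DFunLike.coe (map_zpow toPerm T n).symm

theorem hIter_zero (T : X ≃ₜ X) (x : X) : hIter T 0 x = x := by
  simp [hIter_eq_coe_zpow]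

theorem hIter_add (T : X ≃ₜ X) (a b : ℤ) (x : X) :
    hIter T (a + b) x = hIter T a (hIter T b x) := by
  simp [hIter_eq_coe_zpow, zpow_add]

theorem hIter_add_comm (T : X ≃ₜ X) (a b : ℤ) (x : X) :
    hIter T a (hIter T b x) = hIter T b (hIter T a x) := by
  rw [← hIter_add, add_comm, hIter_add]

theorem continuous_hIter (T : X ≃ₜ X) (n : ℤ) : Continuous (hIter T n) := by
  rw [hIter_eq_coe_zpow]
  exact (T ^ n).continuous

theorem coe_hIter_subtype (T : X ≃ₜ X) {p : X → Prop} (h : ∀ x, p x ↔ p (T x)) (n : ℤ)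
    (y : {x // p x}) : (hIter (T.subtype h) n y).1 = hIter T n y := by
  have : (T.subtype h).toEquiv = Equiv.Perm.subtypePerm T.toEquiv fun x => (h x).symm := rfl
  simp only [hIter, zIter, this, Equiv.Perm.subtypePerm_zpow, Equiv.Perm.subtypePerm_apply]

theorem mapsTo_hIter_closure_orbit (T : X ≃ₜ X) (x : X) (n : ℤ) :
    Set.MapsTo (hIter T n) (closure (Set.range fun m : ℤ => hIter T m x))
      (closure (Set.range fun m : ℤ => hIter T m x)) := by
  refine Set.MapsTo.closure ?_ (continuous_hIter T n)
  rintro _ ⟨m, rfl⟩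
  exact ⟨n + m, hIter_add T n m x⟩

end Iterates

section MinimalSubsystem

variable {X : Type*} [TopologicalSpace X]

theorem exists_minimal_invariant_closed [CompactSpace X] [Nonempty X] (T : X ≃ₜ X) :
    ∃ Y : Set X, Y.Nonempty ∧ IsClosed Y ∧ (∀ n, Set.MapsTo (hIter T n) Y Y) ∧
      ∀ y ∈ Y, Y ⊆ closure (Set.range fun n : ℤ => hIter T n y) := by
  let S : Set (Set X) := {A | A.Nonempty ∧ IsClosed A ∧ ∀ n, Set.MapsTo (hIter T n) A A}
  have chain_lb : ∀ c ⊆ S, IsChain (· ⊆ ·) c → c.Nonempty → ∃ lb ∈ S, ∀ s ∈ c, lb ⊆ s := by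
    intro c hcS hchain hcne
    have : Nonempty c := hcne.to_subtype
    refine ⟨⋂₀ c, ⟨?_, isClosed_sInter fun A hA => (hcS hA).2.1, ?_⟩,
      fun A hA => Set.sInter_subset_of_mem hA⟩
    · exact IsCompact.nonempty_sInter_of_directed_nonempty_isCompact_isClosed
        (IsChain.directedOn (r := fun A B : Set X => A ⊇ B) hchain.symm) (fun A hA => (hcS hA).1)
        (fun A hA => (hcS hA).2.1.isCompact) (fun A hA => (hcS hA).2.1)
    · exact fun n x hx A hA => (hcS hA).2.2 n (hx A hA)
  have univ_mem : Set.univ ∈ S := ⟨Set.univ_nonempty, isClosed_univ, fun n => Set.mapsTo_univ _ _⟩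
  obtain ⟨Y, -, hY⟩ := zorn_superset_nonempty S chain_lb Set.univ univ_mem
  obtain ⟨hYne, hYcl, hYinv⟩ := hY.prop
  refine ⟨Y, hYne, hYcl, hYinv, fun y hy => hY.le_of_le ?_ ?_⟩
  · exact ⟨⟨y, subset_closure ⟨0, hIter_zero T y⟩⟩, isClosed_closure,
      mapsTo_hIter_closure_orbit T y⟩
  · exact closure_minimal (Set.range_subset_iff.2 fun n => hYinv n hy) hYcl

theorem minimalTDS_subtype (T : X ≃ₜ X) {Y : Set X} (h : ∀ x, x ∈ Y ↔ T x ∈ Y)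
    (hmin : ∀ y ∈ Y, Y ⊆ closure (Set.range fun n : ℤ => hIter T n y)) :
    MinimalTDS (T.subtype h) := by
  intro y
  rw [Subtype.dense_iff, ← Set.range_comp]
  convert hmin y y.2 using 4 with n
  exact coe_hIter_subtype T h n y

theorem exists_minimal_subsystem [CompactSpace X] [Nonempty X] (T : X ≃ₜ X) :
    ∃ Y : Set X, Y.Nonempty ∧ IsClosed Y ∧ ∃ S : Y ≃ₜ Y, MinimalTDS S ∧
      ∀ n y, (hIter S n y).1 = hIter T n y := by
  obtain ⟨Y, hYne, hYcl, hYinv, hYmin⟩ := exists_minimal_invariant_closed T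
  have h : ∀ x, x ∈ Y ↔ T x ∈ Y := fun x =>
    ⟨fun hx => by simpa [hIter_eq_coe_zpow] using hYinv 1 hx,
     fun hx => by simpa [hIter_eq_coe_zpow] using hYinv (-1) hx⟩
  exact ⟨Y, hYne, hYcl, T.subtype h, minimalTDS_subtype T h hYmin, coe_hIter_subtype T h⟩

end MinimalSubsystem

section Recurrence

variable {X : Type*} [MetricSpace X]

def fsReturnSet (T : X ≃ₜ X) (d : ℕ) (P : Set ℤ) (r : ℝ) : Set X :=
  {x | ∃ n : Fin d → ℤ, FS n ⊆ P ∧ ∀ I : Finset (Fin d), dist (hIter T (∑ j ∈ I, n j) x) x < r}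

theorem isOpen_fsReturnSet (T : X ≃ₜ X) (d : ℕ) (P : Set ℤ) (r : ℝ) :
    IsOpen (fsReturnSet T d P r) := by
  have : fsReturnSet T d P r = ⋃ n ∈ {n : Fin d → ℤ | FS n ⊆ P}, ⋂ I : Finset (Fin d),
      {x | dist (hIter T (∑ j ∈ I, n j) x) x < r} := by
    ext x
    simp [fsReturnSet]
  rw [this]
  exact isOpen_biUnion fun n _ => isOpen_iInter_of_finite fun I =>
    isOpen_lt ((continuous_hIter T _).dist continuous_id) continuous_const

theorem dense_fsReturnSet {X : Type} [MetricSpace X] [CompactSpace X] {d : ℕ} {P : Set ℤ}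
    (hP : BirkhoffRecSet d P) {T : X ≃ₜ X} (hT : MinimalTDS T) {r : ℝ} (hr : 0 < r) :
    Dense (fsReturnSet T d P r) := by
  rw [Metric.dense_iff]
  intro z ρ hρ
  set δ := min ρ (r / 2)
  have hδ : 0 < δ := lt_min hρ (half_pos hr)
  obtain ⟨n, hnP, w, hwz, hw⟩ :=
    hP X T hT (Metric.ball z δ) Metric.isOpen_ball (Metric.nonempty_ball.2 hδ)
  refine ⟨w, Metric.ball_subset_ball (min_le_left _ _) hwz, n, hnP, fun I => ?_⟩
  rcases I.eq_empty_or_nonempty with rfl | hI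
  · simpa [hIter_zero] using hr
  · have hIw : dist (hIter T (∑ j ∈ I, n j) w) z < δ :=
      Set.mem_iInter₂.1 hw _ ⟨I, hI, rfl⟩
    calc dist (hIter T (∑ j ∈ I, n j) w) w
        ≤ dist (hIter T (∑ j ∈ I, n j) w) z + dist w z := dist_triangle_right _ _ _
      _ < δ + δ := add_lt_add hIw hwz
      _ ≤ r := by linarith [min_le_right ρ (r / 2)]

theorem exists_fs_recurrent_of_minimal {X : Type} [MetricSpace X] [CompactSpace X] [Nonempty X]
    {d : ℕ} {P : Set ℤ} (hP : BirkhoffRecSet d P) {T : X ≃ₜ X} (hT : MinimalTDS T) :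
    ∃ (x : X) (nn : ℕ → Fin d → ℤ), (∀ i, FS (nn i) ⊆ P) ∧
      ∀ ε : Finset (Fin d), Tendsto (fun i => hIter T (∑ j ∈ ε, nn i j) x) atTop (𝓝 x) := by
  obtain ⟨x, hx⟩ := (dense_iInter_of_isOpen
    (fun i : ℕ => isOpen_fsReturnSet T d P (1 / ((i : ℝ) + 1)))
    (fun i => dense_fsReturnSet hP hT Nat.one_div_pos_of_nat)).nonempty
  choose nn hnnP hnn using Set.mem_iInter.1 hx
  refine ⟨x, nn, hnnP, fun ε => tendsto_iff_dist_tendsto_zero.2 ?_⟩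
  exact squeeze_zero (fun _ => dist_nonneg) (fun i => (hnn i ε).le)
    tendsto_one_div_add_atTop_nhds_zero_nat

end Recurrence

theorem BirkhoffRecSet.exists_fs_recurrent {d : ℕ} {P : Set ℤ} (hP : BirkhoffRecSet d P)
    {X : Type} [MetricSpace X] [CompactSpace X] [Nonempty X] (T : X ≃ₜ X) :
    ∃ (x : X) (nn : ℕ → Fin d → ℤ), (∀ i, FS (nn i) ⊆ P) ∧
      ∀ ε : Finset (Fin d), Tendsto (fun i => hIter T (∑ j ∈ ε, nn i j) x) atTop (𝓝 x) := by
  obtain ⟨Y, hYne, hYcl, S, hS, hST⟩ := exists_minimal_subsystem T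
  have : CompactSpace Y := isCompact_iff_compactSpace.1 hYcl.isCompact
  have : Nonempty Y := hYne.to_subtype
  obtain ⟨y, nn, hnnP, htend⟩ := exists_fs_recurrent_of_minimal hP hS
  refine ⟨y, nn, hnnP, fun ε => ?_⟩
  simpa only [Function.comp_def, hST] using (continuous_subtype_val.tendsto y).comp (htend ε)

theorem exists_fs_return_of_tendsto {X : Type*} [TopologicalSpace X] {T : X ≃ₜ X}
    (hT : MinimalTDS T) {U : Set X} (hU : IsOpen U) (hne : U.Nonempty) {d : ℕ} {P : Set ℤ}
    {x : X} {nn : ℕ → Fin d → ℤ} (hnnP : ∀ i, FS (nn i) ⊆ P)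
    (htend : ∀ ε : Finset (Fin d), Tendsto (fun i => hIter T (∑ j ∈ ε, nn i j) x) atTop (𝓝 x)) :
    ∃ n : Fin d → ℤ, FS n ⊆ P ∧ (U ∩ ⋂ m ∈ FS n, hIter T m ⁻¹' U).Nonempty := by
  obtain ⟨_, ⟨k, rfl⟩, hkU⟩ := (hT x).exists_mem_open hU hne
  have hV : hIter T k ⁻¹' U ∈ 𝓝 x := (hU.preimage (continuous_hIter T k)).mem_nhds hkU
  obtain ⟨i, hi⟩ := (Filter.eventually_all.2 fun ε => htend ε hV).exists
  refine ⟨nn i, hnnP i, hIter T k x, hkU, Set.mem_iInter₂.2 ?_⟩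
  rintro _ ⟨I, -, rfl⟩
  rw [Set.mem_preimage, hIter_add_comm]
  exact hi I

theorem statement8_general (d : ℕ) (P : Set ℤ) :
    BirkhoffRecSet d P ↔
      ∀ (X : Type) [MetricSpace X] [CompactSpace X] [Nonempty X] (T : X ≃ₜ X),
        ∃ (x : X) (nn : ℕ → Fin d → ℤ), (∀ i, FS (nn i) ⊆ P) ∧
          ∀ ε : Finset (Fin d),
            Filter.Tendsto (fun i => hIter T (∑ j ∈ ε, nn i j) x)
              Filter.atTop (nhds x) := by
  refine ⟨fun hP X _ _ _ T => hP.exists_fs_recurrent T, fun h X _ _ T hT U hU hne => ?_⟩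
  have : Nonempty X := ⟨hne.some⟩
  obtain ⟨x, nn, hnnP, htend⟩ := h X T
  exact exists_fs_return_of_tendsto hT hU hne hnnP htend

/-- Characterization of Birkhoff recurrence sets of order `d` via recurrence of
points in arbitrary topological dynamical systems. -/
theorem statement8 (d : ℕ) (hd : 1 ≤ d) (P : Set ℤ) :
    BirkhoffRecSet d P ↔
      ∀ (X : Type) [MetricSpace X] [CompactSpace X] [Nonempty X] (T : X ≃ₜ X),
        ∃ (x : X) (nn : ℕ → Fin d → ℤ), (∀ i, FS (nn i) ⊆ P) ∧
          ∀ ε : Finset (Fin d),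
            Filter.Tendsto (fun i => hIter T (∑ j ∈ ε, nn i j) x)
              Filter.atTop (nhds x) :=
  statement8_general d P
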